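/- Let ψ : ℝ³ → ℝ satisfy ψ(Z(θ)·v) = ψ(v) for all θ ∈ ℝ and v ∈ ℝ³. Let x ∈ ℝ³ with x ≠ 0, h = ‖x‖, and Q ∈ SO(3). Choose α, β ∈ ℝ with Z(α)·Y(β)·n = x/‖x‖ and α′, β′ ∈ ℝ with Z(α′)·Y(β′)·n = Q·x/‖x‖. Then for every v ∈ ℝ³: ψ((Z(α′)·Y(β′)·Z(2πh))⁻¹ · (Q·v)) = ψ((Z(α)·Y(β)·Z(2πh))⁻¹ · v). -/

import Mathlib

/-!
Write `R = Z(α) Y(β)` and `R' = Z(α') Y(β')`. Since `R n = x/‖x‖` and `R' n = Q x/‖x‖`, the rotation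
`R'⁻¹ Q R ∈ SO(3)` fixes the North Pole, so it is a z-rotation `Z(θ)`. As z-rotations commute,
`(R' Z(c))⁻¹ Q = Z(θ) (R Z(c))⁻¹` for every `c`, and `ψ` absorbs the leading `Z(θ)`.
-/

/-- The 3×3 rotation matrix about the z-axis by angle `θ`. -/
noncomputable def Zr (θ : ℝ) : Matrix (Fin 3) (Fin 3) ℝ :=
  !![Real.cos θ, -Real.sin θ, 0; Real.sin θ, Real.cos θ, 0; 0, 0, 1]

/-- The 3×3 rotation matrix about the y-axis by angle `β`. -/
noncomputable def Yr (β : ℝ) : Matrix (Fin 3) (Fin 3) ℝ :=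
  !![Real.cos β, 0, Real.sin β; 0, 1, 0; -Real.sin β, 0, Real.cos β]

/-- The North Pole `n = (0,0,1)ᵀ`. -/
def npole : Fin 3 → ℝ := ![0, 0, 1]

/-- The Euclidean norm of a vector in `ℝ³`. -/
noncomputable def enorm3 (v : Fin 3 → ℝ) : ℝ :=
  Real.sqrt (v 0 ^ 2 + v 1 ^ 2 + v 2 ^ 2)

open Matrix

lemma Zr_add (a b : ℝ) : Zr (a + b) = Zr a * Zr b := by
  ext i j
  fin_cases i <;> fin_cases j <;>
    simp [Zr, mul_apply, Fin.sum_univ_three, Real.cos_add, Real.sin_add] <;> ring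

lemma Zr_zero : Zr 0 = 1 := by
  simp [Zr, one_fin_three]

lemma Zr_inv (θ : ℝ) : (Zr θ)⁻¹ = Zr (-θ) :=
  inv_eq_left_inv (by rw [← Zr_add, neg_add_cancel, Zr_zero])

lemma Zr_mem_specialOrthogonalGroup (θ : ℝ) : Zr θ ∈ specialOrthogonalGroup (Fin 3) ℝ := by
  refine ⟨(mem_orthogonalGroup_iff' _ _).2 ?_, ?_⟩
  · ext i j
    fin_cases i <;> fin_cases j <;> simp [Zr, mul_apply, Fin.sum_univ_three, ← sq] <;> ring
  · simp [Zr, det_fin_three, ← sq]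

lemma Yr_mem_specialOrthogonalGroup (θ : ℝ) : Yr θ ∈ specialOrthogonalGroup (Fin 3) ℝ := by
  refine ⟨(mem_orthogonalGroup_iff' _ _).2 ?_, ?_⟩
  · ext i j
    fin_cases i <;> fin_cases j <;> simp [Yr, mul_apply, Fin.sum_univ_three, ← sq] <;> ring
  · simp [Yr, det_fin_three, ← sq]

lemma Real.exists_cos_eq_sin_eq {a b : ℝ} (h : a ^ 2 + b ^ 2 = 1) :
    ∃ θ, Real.cos θ = a ∧ Real.sin θ = b := by
  obtain ⟨θ, hθ⟩ := (Complex.norm_eq_one_iff ⟨a, b⟩).1 <| by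
    rw [Complex.norm_def, Complex.normSq_mk, ← sq, ← sq, h, Real.sqrt_one]
  exact ⟨θ, by rw [← Complex.exp_ofReal_mul_I_re, hθ], by rw [← Complex.exp_ofReal_mul_I_im, hθ]⟩

lemma exists_eq_Zr_of_mulVec_npole {A : Matrix (Fin 3) (Fin 3) ℝ}
    (hA : A ∈ specialOrthogonalGroup (Fin 3) ℝ) (hn : A *ᵥ npole = npole) : ∃ θ, A = Zr θ := by
  obtain ⟨hAo, hdet⟩ := mem_specialOrthogonalGroup_iff.1 hA
  have hAtA : Aᵀ * A = 1 := (mem_orthogonalGroup_iff' _ _).1 hAo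
  have hnT : Aᵀ *ᵥ npole = npole := by
    calc Aᵀ *ᵥ npole = Aᵀ *ᵥ (A *ᵥ npole) := by rw [hn]
      _ = npole := by rw [mulVec_mulVec, hAtA, one_mulVec]
  obtain ⟨h02, h12, h22⟩ : A 0 2 = 0 ∧ A 1 2 = 0 ∧ A 2 2 = 1 := by
    simpa [funext_iff, Fin.forall_fin_succ, mulVec, dotProduct, npole, Fin.sum_univ_three] using hn
  obtain ⟨h20, h21, -⟩ : A 2 0 = 0 ∧ A 2 1 = 0 ∧ A 2 2 = 1 := by
    simpa [funext_iff, Fin.forall_fin_succ, mulVec, dotProduct, npole, Fin.sum_univ_three] using hnT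
  have hnorm : A 0 0 ^ 2 + A 1 0 ^ 2 = 1 := by
    simpa [mul_apply, Fin.sum_univ_three, h20, ← sq] using congrFun (congrFun hAtA 0) 0
  have horth : A 0 0 * A 0 1 + A 1 0 * A 1 1 = 0 := by
    simpa [mul_apply, Fin.sum_univ_three, h20] using congrFun (congrFun hAtA 0) 1
  have hdet2 : A 0 0 * A 1 1 - A 0 1 * A 1 0 = 1 := by
    simpa [det_fin_three, h02, h12, h20, h21, h22] using hdet
  obtain ⟨θ, hcos, hsin⟩ := Real.exists_cos_eq_sin_eq hnorm
  refine ⟨θ, ?_⟩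
  have h01 : A 0 1 = -Real.sin θ := by
    rw [hsin]; linear_combination A 0 0 * horth - A 0 1 * hnorm - A 1 0 * hdet2
  have h11 : A 1 1 = Real.cos θ := by
    rw [hcos]; linear_combination A 1 0 * horth + A 0 0 * hdet2 - A 1 1 * hnorm
  ext i j
  fin_cases i <;> fin_cases j <;> simp [Zr, hcos, hsin, h01, h11, h02, h12, h20, h21, h22]

lemma exists_mul_eq_mul_Zr_of_mulVec_npole {Q R R' : Matrix (Fin 3) (Fin 3) ℝ}
    (hQ : Q ∈ specialOrthogonalGroup (Fin 3) ℝ) (hR : R ∈ specialOrthogonalGroup (Fin 3) ℝ)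
    (hR' : R' ∈ specialOrthogonalGroup (Fin 3) ℝ) (h : Q *ᵥ (R *ᵥ npole) = R' *ᵥ npole) :
    ∃ θ, Q * R = R' * Zr θ := by
  have hR'R' : star R' * R' = 1 := mem_unitaryGroup_iff'.1 hR'.1
  have hM : star R' * Q * R ∈ specialOrthogonalGroup (Fin 3) ℝ :=
    mul_mem (mul_mem (star (⟨R', hR'⟩ : specialOrthogonalGroup (Fin 3) ℝ)).2 hQ) hR
  obtain ⟨θ, hθ⟩ := exists_eq_Zr_of_mulVec_npole hM <| by
    rw [← mulVec_mulVec, ← mulVec_mulVec, h, mulVec_mulVec, hR'R', one_mulVec]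
  refine ⟨θ, ?_⟩
  rw [← hθ, mul_assoc, ← mul_assoc, ← mul_assoc, mem_unitaryGroup_iff.1 hR'.1, one_mul]

lemma inv_mul_eq_Zr_mul_inv {Q R R' : Matrix (Fin 3) (Fin 3) ℝ} (hR : IsUnit R.det)
    (hR' : IsUnit R'.det) {θ : ℝ} (h : Q * R = R' * Zr θ) (c : ℝ) :
    (R' * Zr c)⁻¹ * Q = Zr θ * (R * Zr c)⁻¹ := by
  have hQ : Q = R' * Zr θ * R⁻¹ := by rw [← h, mul_nonsing_inv_cancel_right _ _ hR]
  calc (R' * Zr c)⁻¹ * Q = Zr (-c) * (R'⁻¹ * (R' * (Zr θ * R⁻¹))) := by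
        rw [hQ, Matrix.mul_inv_rev, Zr_inv]; simp only [mul_assoc]
    _ = Zr (-c) * Zr θ * R⁻¹ := by rw [nonsing_inv_mul_cancel_left _ _ hR', mul_assoc]
    _ = Zr θ * (Zr (-c) * R⁻¹) := by rw [← Zr_add, add_comm, Zr_add, mul_assoc]
    _ = Zr θ * (R * Zr c)⁻¹ := by rw [Matrix.mul_inv_rev, Zr_inv]

theorem sparse_correlation_pointwise_identity_general
    (ψ : (Fin 3 → ℝ) → ℝ)
    (hψ : ∀ (θ : ℝ) (v : Fin 3 → ℝ), ψ ((Zr θ).mulVec v) = ψ v)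
    (x : Fin 3 → ℝ)
    (Q : Matrix (Fin 3) (Fin 3) ℝ) (hQ : Q ∈ Matrix.specialOrthogonalGroup (Fin 3) ℝ)
    (α β α' β' : ℝ)
    (hαβ : (Zr α * Yr β).mulVec npole = (enorm3 x)⁻¹ • x)
    (hαβ' : (Zr α' * Yr β').mulVec npole = (enorm3 x)⁻¹ • Q.mulVec x)
    (v : Fin 3 → ℝ) :
    ψ ((Zr α' * Yr β' * Zr (2 * Real.pi * enorm3 x))⁻¹.mulVec (Q.mulVec v))
      = ψ ((Zr α * Yr β * Zr (2 * Real.pi * enorm3 x))⁻¹.mulVec v) := by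
  have hR := mul_mem (Zr_mem_specialOrthogonalGroup α) (Yr_mem_specialOrthogonalGroup β)
  have hR' := mul_mem (Zr_mem_specialOrthogonalGroup α') (Yr_mem_specialOrthogonalGroup β')
  obtain ⟨θ, hθ⟩ := exists_mul_eq_mul_Zr_of_mulVec_npole hQ hR hR' <| by
    rw [hαβ, hαβ', mulVec_smul]
  have hunit {A : Matrix (Fin 3) (Fin 3) ℝ} (hA : A ∈ specialOrthogonalGroup (Fin 3) ℝ) :
      IsUnit A.det := (mem_specialOrthogonalGroup_iff.1 hA).2 ▸ isUnit_one
  rw [mulVec_mulVec, inv_mul_eq_Zr_mul_inv (hunit hR) (hunit hR') hθ, ← mulVec_mulVec, hψ]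

/-- **The per-point identity underlying the rotation invariance of the sparse correlation.**
If `ψ` is constant on the left coset of z-axis rotations, `x ≠ 0`, `h = ‖x‖`, `Q ∈ SO(3)`,
and `(α, β)` resp. `(α′, β′)` are spherical angles of `x/‖x‖` resp. `Q·x/‖x‖`, then
`ψ((Z(α′)Y(β′)Z(2πh))⁻¹ · (Q·v)) = ψ((Z(α)Y(β)Z(2πh))⁻¹ · v)` for every `v`. -/
theorem sparse_correlation_pointwise_identity
    (ψ : (Fin 3 → ℝ) → ℝ)
    (hψ : ∀ (θ : ℝ) (v : Fin 3 → ℝ), ψ ((Zr θ).mulVec v) = ψ v)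
    (x : Fin 3 → ℝ) (hx : x ≠ 0)
    (Q : Matrix (Fin 3) (Fin 3) ℝ) (hQ : Q ∈ Matrix.specialOrthogonalGroup (Fin 3) ℝ)
    (α β α' β' : ℝ)
    (hαβ : (Zr α * Yr β).mulVec npole = (enorm3 x)⁻¹ • x)
    (hαβ' : (Zr α' * Yr β').mulVec npole = (enorm3 x)⁻¹ • Q.mulVec x)
    (v : Fin 3 → ℝ) :
    ψ ((Zr α' * Yr β' * Zr (2 * Real.pi * enorm3 x))⁻¹.mulVec (Q.mulVec v))
      = ψ ((Zr α * Yr β * Zr (2 * Real.pi * enorm3 x))⁻¹.mulVec v) :=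
  sparse_correlation_pointwise_identity_general ψ hψ x Q hQ α β α' β' hαβ hαβ' v
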